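/- arXiv:math/0410514 — 7 statements merged into one kernel-verified Lean document; each statement's English description precedes it below -/
import Mathlib

section
/- Let Q be an r×r real matrix, U a v×r real matrix and V an r×v real matrix such that U·V = I_v (the v×v identity) and V·U·Q·V = Q·V. Then for every real t, V·U·exp(tQ)·V = exp(tQ)·V, where exp denotes the matrix exponential. -/
/-!
Put `P = V * U`. Since `U * V = 1`, `P` is idempotent with `P * V = V`, and lumpability of `Q`
says that `t • Q` leaves the range of `P` invariant: `P * (t • Q) * P = t • Q * P`. Then `P`
intertwines `P * (t • Q) * P` with `t • Q`, hence also their exponentials, which gives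
`P * exp (t • Q) * P = exp (t • Q) * P`; multiplying on the right by `V` is the claim.
-/

open NormedSpace

theorem IsIdempotentElem.mul_exp_mul_of_mul_mul_eq {𝔸 : Type*} [NormedRing 𝔸]
    [NormedAlgebra ℚ 𝔸] [CompleteSpace 𝔸] {p a : 𝔸} (hp : IsIdempotentElem p)
    (ha : p * a * p = a * p) : p * exp a * p = exp a * p := by
  have hsemiconj : SemiconjBy p (p * a * p) a := by
    rw [SemiconjBy, ← ha, ← mul_assoc, ← mul_assoc, hp.eq]
  rw [mul_assoc, ← hsemiconj.exp_right.eq, ← mul_assoc, hp.eq]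

theorem Matrix.mul_exp_mul_of_isIdempotentElem {m 𝔸 : Type*} [Fintype m] [DecidableEq m]
    [NormedRing 𝔸] [NormedAlgebra ℚ 𝔸] [CompleteSpace 𝔸] {P A : Matrix m m 𝔸}
    (hP : IsIdempotentElem P) (hA : P * A * P = A * P) : P * exp A * P = exp A * P :=
  open scoped Norms.Operator in
  -- The operator-norm uniformity agrees with the product uniformity only up to unfolding,
  -- so completeness has to be supplied by hand.
  @IsIdempotentElem.mul_exp_mul_of_mul_mul_eq _ _ _
    (inferInstanceAs (CompleteSpace (m → m → 𝔸))) _ _ hP hA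

open NormedSpace in
theorem lumpable_generator_implies_lumpable_semigroup (r v : ℕ)
    (Q : Matrix (Fin r) (Fin r) ℝ) (U : Matrix (Fin v) (Fin r) ℝ)
    (V : Matrix (Fin r) (Fin v) ℝ)
    (hUV : U * V = 1) (hQ : V * U * Q * V = Q * V) (t : ℝ) :
    V * U * exp (t • Q) * V = exp (t • Q) * V := by
  have hVUV : V * U * V = V := by rw [Matrix.mul_assoc, hUV, Matrix.mul_one]
  have hidem : IsIdempotentElem (V * U) := by
    rw [IsIdempotentElem, ← Matrix.mul_assoc, hVUV]
  have hinvariant : V * U * (t • Q) * (V * U) = t • Q * (V * U) := by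
    simp only [Matrix.mul_smul, Matrix.smul_mul, ← Matrix.mul_assoc, hQ]
  calc V * U * exp (t • Q) * V = V * U * exp (t • Q) * (V * U) * V := by
        rw [Matrix.mul_assoc _ (V * U), hVUV]
    _ = exp (t • Q) * V := by
        rw [Matrix.mul_exp_mul_of_isIdempotentElem hidem hinvariant, Matrix.mul_assoc, hVUV]
end

section
/- Let Q be an r×r real matrix, U a v×r real matrix and V an r×v real matrix such that U·V = I_v and V·U·Q·V = Q·V. Then for every real t, U·exp(tQ)·V = exp(t·(U·Q·V)), where exp denotes the matrix exponential. -/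
/-!
Lumpability `V U Q V = Q V` says that `Q` intertwines `V` with the lumped generator
`Q̄ = U Q V`: `Q V = V Q̄`. Intertwining passes to powers, hence termwise through the
exponential series, giving `exp (t Q) V = V exp (t Q̄)`; multiplying on the left by `U`
and using `U V = 1` finishes.
-/

namespace Matrix

open NormedSpace Nat

variable {m n 𝕂 : Type*} [Fintype m] [Fintype n] [DecidableEq m] [DecidableEq n]

theorem pow_mul_eq_mul_pow_of_mul_eq_mul [Semiring 𝕂]
    {A : Matrix m m 𝕂} {B : Matrix n n 𝕂} {V : Matrix m n 𝕂} (h : A * V = V * B) (k : ℕ) :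
    A ^ k * V = V * B ^ k := by
  induction k with
  | zero => simp
  | succ k ih =>
    rw [pow_succ, pow_succ, Matrix.mul_assoc, h, ← Matrix.mul_assoc, ih, Matrix.mul_assoc]

theorem exp_mul_eq_mul_exp_of_mul_eq_mul [RCLike 𝕂]
    {A : Matrix m m 𝕂} {B : Matrix n n 𝕂} {V : Matrix m n 𝕂} (h : A * V = V * B) :
    exp A * V = V * exp B := by
  have hterm (k : ℕ) : ((k !⁻¹ : 𝕂) • A ^ k) * V = V * ((k !⁻¹ : 𝕂) • B ^ k) := by
    rw [Matrix.smul_mul, Matrix.mul_smul, pow_mul_eq_mul_pow_of_mul_eq_mul h]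
  -- The operator norm only serves to sum the exponential series; `exp` does not depend on it.
  open scoped Norms.Operator in
  have hA : HasSum (fun k : ℕ => ((k !⁻¹ : 𝕂) • A ^ k) * V) (exp A * V) :=
    (exp_series_hasSum_exp' A).map (mulRightLinearMap m 𝕂 V)
      (continuous_id.matrix_mul continuous_const)
  open scoped Norms.Operator in
  have hB : HasSum (fun k : ℕ => V * ((k !⁻¹ : 𝕂) • B ^ k)) (V * exp B) :=
    (exp_series_hasSum_exp' B).map (mulLeftLinearMap n 𝕂 V)
      (continuous_const.matrix_mul continuous_id)
  simp only [hterm] at hA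
  exact hA.unique hB

end Matrix

open NormedSpace in
theorem lumped_semigroup_eq_exp_lumped_generator (r v : ℕ)
    (Q : Matrix (Fin r) (Fin r) ℝ) (U : Matrix (Fin v) (Fin r) ℝ)
    (V : Matrix (Fin r) (Fin v) ℝ)
    (hUV : U * V = 1) (hQ : V * U * Q * V = Q * V) (t : ℝ) :
    U * exp (t • Q) * V = exp (t • (U * Q * V)) := by
  have hintertwine : (t • Q) * V = V * (t • (U * Q * V)) := by
    rw [Matrix.smul_mul, Matrix.mul_smul, ← hQ]
    simp only [Matrix.mul_assoc]
  rw [Matrix.mul_assoc, Matrix.exp_mul_eq_mul_exp_of_mul_eq_mul hintertwine, ← Matrix.mul_assoc,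
    hUV, Matrix.one_mul]
end

section
/- Let Q be an r×r real matrix, U a v×r real matrix and V an r×v real matrix with U·V = I_v. If V·U·exp(tQ)·V = exp(tQ)·V for all real t, then V·U·Q·V = Q·V. -/
open NormedSpace in
theorem ContinuousLinearMap.map_eq_zero_of_forall_map_exp_smul_eq_zero {𝕂 𝔸 E : Type*}
    [RCLike 𝕂] [NormedRing 𝔸] [NormedAlgebra 𝕂 𝔸] [CompleteSpace 𝔸]
    [NormedAddCommGroup E] [NormedSpace 𝕂 E] (L : 𝔸 →L[𝕂] E) (a : 𝔸)
    (h : ∀ t : 𝕂, L (exp (t • a)) = 0) : L a = 0 := by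
  have hderiv : HasDerivAt (fun t : 𝕂 => L (exp (t • a))) (L a) 0 := by
    simpa [Function.comp_def] using
      L.hasFDerivAt.comp_hasDerivAt (0 : 𝕂) (hasDerivAt_exp_smul_const a (0 : 𝕂))
  rw [funext h] at hderiv
  exact hderiv.unique (hasDerivAt_const 0 0)

open NormedSpace in
theorem lumpable_semigroup_implies_lumpable_generator_general (r v : ℕ)
    (Q : Matrix (Fin r) (Fin r) ℝ) (U : Matrix (Fin v) (Fin r) ℝ)
    (V : Matrix (Fin r) (Fin v) ℝ)
    (hP : ∀ t : ℝ, V * U * exp (t • Q) * V = exp (t • Q) * V) :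
    V * U * Q * V = Q * V := by
  -- Matrices carry no global norm; any one will do for differentiating in finite dimension.
  let _ := Matrix.linftyOpNormedRing (n := Fin r) (α := ℝ)
  let _ := Matrix.linftyOpNormedAlgebra (n := Fin r) (R := ℝ) (α := ℝ)
  let _ := Matrix.linftyOpNormedAddCommGroup (m := Fin r) (n := Fin v) (α := ℝ)
  let _ := Matrix.linftyOpNormedSpace (R := ℝ) (m := Fin r) (n := Fin v) (α := ℝ)
  let L := (mulLeftLinearMap (Fin v) ℝ (V * U - 1) ∘ₗ
    mulRightLinearMap (Fin r) ℝ V).toContinuousLinearMap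
  have hL : ∀ A, L A = V * U * A * V - A * V := fun A => by
    simp [L, Matrix.sub_mul, Matrix.mul_assoc]
  rw [← sub_eq_zero, ← hL]
  exact L.map_eq_zero_of_forall_map_exp_smul_eq_zero Q fun t =>
    (hL _).trans (sub_eq_zero.mpr (hP t))

open NormedSpace in
theorem lumpable_semigroup_implies_lumpable_generator (r v : ℕ)
    (Q : Matrix (Fin r) (Fin r) ℝ) (U : Matrix (Fin v) (Fin r) ℝ)
    (V : Matrix (Fin r) (Fin v) ℝ)
    (hUV : U * V = 1)
    (hP : ∀ t : ℝ, V * U * exp (t • Q) * V = exp (t • Q) * V) :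
    V * U * Q * V = Q * V :=
  lumpable_semigroup_implies_lumpable_generator_general r v Q U V hP
end

section
/- Fix an integer n ≥ 2 and a real number x with 0 < x < 1. For each integer k with 2 ≤ k ≤ n define the (k+1)×k real matrix J_k (rows indexed i = 0,…,k; columns indexed j = 0,…,k−1) by J_k[i][j] = (1/C(k,2))·A, where A = (1−x)·C(i,2) if j = i−2, A = x·C(i,2) + x·i·(k−i) if j = i−1, A = (1−x)·C(k−i,2) + (1−x)·i·(k−i) if j = i, A = x·C(k−i,2) if j = i+1, and A = 0 otherwise; here C(m,2) = m(m−1)/2. Then the matrix product J_n · J_{n−1} ⋯ J_2, which is an (n+1)×2 real matrix, has the following entries for each row i with 0 ≤ i ≤ n: the entry in column 0 equals 1/2 + (1/2)(1−2x)^{n−1} if i is even and 1/2 − (1/2)(1−2x)^{n−1} if i is odd; the entry in column 1 equals 1/2 − (1/2)(1−2x)^{n−1} if i is even and 1/2 + (1/2)(1−2x)^{n−1} if i is odd. -/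
/-- The transition block of the jump chain of the colored coalescent process from
colored states with `k` individuals (row index `i` = number of black individuals)
to colored states with `k - 1` individuals. -/
noncomputable def coalJ (x : ℝ) (k : ℕ) : Matrix (Fin (k + 1)) (Fin k) ℝ :=
  Matrix.of fun i j =>
    (1 / (k.choose 2 : ℝ)) *
      (if (j : ℕ) + 2 = (i : ℕ) then (1 - x) * ((i : ℕ).choose 2 : ℝ)
       else if (j : ℕ) + 1 = (i : ℕ) then
         x * ((i : ℕ).choose 2 : ℝ) + x * (i : ℕ) * ((k - (i : ℕ) : ℕ) : ℝ)
       else if (j : ℕ) = (i : ℕ) then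
         (1 - x) * (((k - (i : ℕ) : ℕ).choose 2 : ℝ)) +
           (1 - x) * (i : ℕ) * ((k - (i : ℕ) : ℕ) : ℝ)
       else if (j : ℕ) = (i : ℕ) + 1 then x * (((k - (i : ℕ) : ℕ).choose 2 : ℝ))
       else 0)

/-- The product `J_m · J_{m-1} ⋯ J_2` (junk values for `m < 2`). -/
noncomputable def coalJProd (x : ℝ) : (m : ℕ) → Matrix (Fin (m + 1)) (Fin 2) ℝ
  | 0 => 0
  | 1 => 0
  | 2 => coalJ x 2
  | m + 3 => coalJ x (m + 3) * coalJProd x (m + 2)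

private lemma choose2_add (i d : ℕ) : (i + d).choose 2 = i.choose 2 + d.choose 2 + i * d := by
  induction d with
  | zero => simp
  | succ d ih =>
    have e : i + (d + 1) = (i + d) + 1 := by omega
    rw [e]
    have h1 : ((i + d) + 1).choose 2 = (i + d).choose 1 + (i + d).choose 2 :=
      Nat.choose_succ_succ _ _
    have h2 : (d + 1).choose 2 = d.choose 1 + d.choose 2 := Nat.choose_succ_succ _ _
    have h3 : i * (d + 1) = i * d + i := by ring
    simp only [Nat.choose_one_right] at h1 h2
    omega

private lemma fin_sum_point (k c : ℕ) (hc : c < k) (f : ℕ → ℝ) :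
    ∑ t : Fin k, (if (t : ℕ) = c then f (t : ℕ) else 0) = f c := by
  rw [Finset.sum_eq_single (⟨c, hc⟩ : Fin k)]
  · simp
  · intro b _ hb
    rw [if_neg]
    intro h
    exact hb (Fin.ext h)
  · simp

private lemma coalJ_step (x : ℝ) (k : ℕ) (hk : 2 ≤ k) (i : Fin (k + 1)) (c : ℝ) :
    ∑ t : Fin k, coalJ x k i t * (1/2 + (1/2) * (-1 : ℝ)^(t : ℕ) * c)
      = 1/2 + (1/2) * (-1 : ℝ)^(i : ℕ) * ((1 - 2*x) * c) := by
  have hik : (i : ℕ) ≤ k := Nat.lt_succ_iff.mp i.isLt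
  have hKnat : k.choose 2 = (i : ℕ).choose 2 + (k - (i : ℕ)).choose 2 + (i : ℕ) * (k - (i : ℕ)) := by
    have h := choose2_add (i : ℕ) (k - (i : ℕ))
    rwa [Nat.add_sub_cancel' hik] at h
  have hK : (k.choose 2 : ℝ) = ((i : ℕ).choose 2 : ℝ) + ((k - (i : ℕ)).choose 2 : ℝ)
      + ((i : ℕ) : ℝ) * ((k - (i : ℕ) : ℕ) : ℝ) := by exact_mod_cast hKnat
  have hKpos : (0 : ℝ) < (k.choose 2 : ℝ) := by exact_mod_cast Nat.choose_pos hk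
  have hKne : (k.choose 2 : ℝ) ≠ 0 := ne_of_gt hKpos
  have claim : ∀ t : Fin k, coalJ x k i t * (1/2 + (1/2) * (-1 : ℝ)^(t : ℕ) * c) =
      (if (t : ℕ) = (i : ℕ) - 2 then
        (1 / (k.choose 2 : ℝ)) * ((1 - x) * ((i : ℕ).choose 2 : ℝ))
          * (1/2 + (1/2) * (-1 : ℝ)^(t : ℕ) * c) else 0)
    + (if (t : ℕ) = (i : ℕ) - 1 then
        (1 / (k.choose 2 : ℝ)) * (x * ((i : ℕ).choose 2 : ℝ)
          + x * ((i : ℕ) : ℝ) * ((k - (i : ℕ) : ℕ) : ℝ))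
          * (1/2 + (1/2) * (-1 : ℝ)^(t : ℕ) * c) else 0)
    + (if (t : ℕ) = (i : ℕ) then
        (1 / (k.choose 2 : ℝ)) * ((1 - x) * ((k - (i : ℕ)).choose 2 : ℝ)
          + (1 - x) * ((i : ℕ) : ℝ) * ((k - (i : ℕ) : ℕ) : ℝ))
          * (1/2 + (1/2) * (-1 : ℝ)^(t : ℕ) * c) else 0)
    + (if (t : ℕ) = (i : ℕ) + 1 then
        (1 / (k.choose 2 : ℝ)) * (x * ((k - (i : ℕ)).choose 2 : ℝ))
          * (1/2 + (1/2) * (-1 : ℝ)^(t : ℕ) * c) else 0) := by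
    intro t
    simp only [coalJ, Matrix.of_apply]
    by_cases c1 : (t : ℕ) + 2 = (i : ℕ)
    · simp only [if_pos c1,
        if_pos (show (t : ℕ) = (i : ℕ) - 2 by omega),
        if_neg (show ¬((t : ℕ) = (i : ℕ) - 1) by omega),
        if_neg (show ¬((t : ℕ) = (i : ℕ)) by omega),
        if_neg (show ¬((t : ℕ) = (i : ℕ) + 1) by omega)]
      ring
    · by_cases c2 : (t : ℕ) + 1 = (i : ℕ)
      · by_cases h0 : (t : ℕ) = 0
        · have hi1 : (i : ℕ) = 1 := by omega
          simp only [if_neg c1, if_pos c2,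
            if_pos (show (t : ℕ) = (i : ℕ) - 2 by omega),
            if_pos (show (t : ℕ) = (i : ℕ) - 1 by omega),
            if_neg (show ¬((t : ℕ) = (i : ℕ)) by omega),
            if_neg (show ¬((t : ℕ) = (i : ℕ) + 1) by omega)]
          rw [hi1]
          norm_num
        · simp only [if_neg c1, if_pos c2,
            if_neg (show ¬((t : ℕ) = (i : ℕ) - 2) by omega),
            if_pos (show (t : ℕ) = (i : ℕ) - 1 by omega),
            if_neg (show ¬((t : ℕ) = (i : ℕ)) by omega),
            if_neg (show ¬((t : ℕ) = (i : ℕ) + 1) by omega)]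
          ring
      · by_cases c3 : (t : ℕ) = (i : ℕ)
        · by_cases h0 : (i : ℕ) = 0
          · simp only [if_neg c1, if_neg c2, if_pos c3,
              if_pos (show (t : ℕ) = (i : ℕ) - 2 by omega),
              if_pos (show (t : ℕ) = (i : ℕ) - 1 by omega),
              if_neg (show ¬((t : ℕ) = (i : ℕ) + 1) by omega)]
            rw [h0]
            norm_num
          · simp only [if_neg c1, if_neg c2, if_pos c3,
              if_neg (show ¬((t : ℕ) = (i : ℕ) - 2) by omega),
              if_neg (show ¬((t : ℕ) = (i : ℕ) - 1) by omega),
              if_neg (show ¬((t : ℕ) = (i : ℕ) + 1) by omega)]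
            ring
        · by_cases c4 : (t : ℕ) = (i : ℕ) + 1
          · simp only [if_neg c1, if_neg c2, if_neg c3, if_pos c4,
              if_neg (show ¬((t : ℕ) = (i : ℕ) - 2) by omega),
              if_neg (show ¬((t : ℕ) = (i : ℕ) - 1) by omega)]
            ring
          · simp only [if_neg c1, if_neg c2, if_neg c3, if_neg c4,
              if_neg (show ¬((t : ℕ) = (i : ℕ) - 2) by omega),
              if_neg (show ¬((t : ℕ) = (i : ℕ) - 1) by omega)]
            ring
  rw [Finset.sum_congr rfl fun t _ => claim t]
  rw [Finset.sum_add_distrib, Finset.sum_add_distrib, Finset.sum_add_distrib]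
  have hS1 : (∑ t : Fin k, (if (t : ℕ) = (i : ℕ) - 2 then
        (1 / (k.choose 2 : ℝ)) * ((1 - x) * ((i : ℕ).choose 2 : ℝ))
          * (1/2 + (1/2) * (-1 : ℝ)^(t : ℕ) * c) else 0))
      = (1 / (k.choose 2 : ℝ)) * ((1 - x) * ((i : ℕ).choose 2 : ℝ))
          * (1/2 + (1/2) * (-1 : ℝ)^(i : ℕ) * c) := by
    rw [fin_sum_point k ((i : ℕ) - 2) (by omega)
      (fun n => (1 / (k.choose 2 : ℝ)) * ((1 - x) * ((i : ℕ).choose 2 : ℝ))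
          * (1/2 + (1/2) * (-1 : ℝ)^n * c))]
    by_cases h2 : 2 ≤ (i : ℕ)
    · have hp : (-1 : ℝ)^((i : ℕ) - 2) = (-1 : ℝ)^(i : ℕ) := by
        have he : (i : ℕ) - 2 + 2 = (i : ℕ) := by omega
        calc (-1 : ℝ)^((i : ℕ) - 2) = (-1 : ℝ)^((i : ℕ) - 2) * (-1)^2 := by norm_num
          _ = (-1 : ℝ)^((i : ℕ) - 2 + 2) := by rw [pow_add]
          _ = _ := by rw [he]
      rw [hp]
    · have ha0 : ((i : ℕ).choose 2 : ℝ) = 0 := by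
        rw [Nat.choose_eq_zero_of_lt (by omega)]; norm_num
      rw [ha0]; ring
  have hS2 : (∑ t : Fin k, (if (t : ℕ) = (i : ℕ) - 1 then
        (1 / (k.choose 2 : ℝ)) * (x * ((i : ℕ).choose 2 : ℝ)
          + x * ((i : ℕ) : ℝ) * ((k - (i : ℕ) : ℕ) : ℝ))
          * (1/2 + (1/2) * (-1 : ℝ)^(t : ℕ) * c) else 0))
      = (1 / (k.choose 2 : ℝ)) * (x * ((i : ℕ).choose 2 : ℝ)
          + x * ((i : ℕ) : ℝ) * ((k - (i : ℕ) : ℕ) : ℝ))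
          * (1/2 - (1/2) * (-1 : ℝ)^(i : ℕ) * c) := by
    rw [fin_sum_point k ((i : ℕ) - 1) (by omega)
      (fun n => (1 / (k.choose 2 : ℝ)) * (x * ((i : ℕ).choose 2 : ℝ)
          + x * ((i : ℕ) : ℝ) * ((k - (i : ℕ) : ℕ) : ℝ))
          * (1/2 + (1/2) * (-1 : ℝ)^n * c))]
    by_cases h1 : 1 ≤ (i : ℕ)
    · have hp : (-1 : ℝ)^((i : ℕ) - 1) * (-1 : ℝ) = (-1 : ℝ)^(i : ℕ) := by
        have he : (i : ℕ) - 1 + 1 = (i : ℕ) := by omega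
        calc (-1 : ℝ)^((i : ℕ) - 1) * (-1) = (-1 : ℝ)^((i : ℕ) - 1 + 1) := by rw [pow_succ]
          _ = _ := by rw [he]
      rw [← hp]; ring
    · have hi0 : (i : ℕ) = 0 := by omega
      rw [hi0]
      norm_num
  have hS3 : (∑ t : Fin k, (if (t : ℕ) = (i : ℕ) then
        (1 / (k.choose 2 : ℝ)) * ((1 - x) * ((k - (i : ℕ)).choose 2 : ℝ)
          + (1 - x) * ((i : ℕ) : ℝ) * ((k - (i : ℕ) : ℕ) : ℝ))
          * (1/2 + (1/2) * (-1 : ℝ)^(t : ℕ) * c) else 0))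
      = (1 / (k.choose 2 : ℝ)) * ((1 - x) * ((k - (i : ℕ)).choose 2 : ℝ)
          + (1 - x) * ((i : ℕ) : ℝ) * ((k - (i : ℕ) : ℕ) : ℝ))
          * (1/2 + (1/2) * (-1 : ℝ)^(i : ℕ) * c) := by
    by_cases h : (i : ℕ) < k
    · rw [fin_sum_point k (i : ℕ) h
        (fun n => (1 / (k.choose 2 : ℝ)) * ((1 - x) * ((k - (i : ℕ)).choose 2 : ℝ)
          + (1 - x) * ((i : ℕ) : ℝ) * ((k - (i : ℕ) : ℕ) : ℝ))
          * (1/2 + (1/2) * (-1 : ℝ)^n * c))]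
    · have hz : k - (i : ℕ) = 0 := by omega
      rw [Finset.sum_eq_zero, hz]
      · norm_num
      · intro t _
        rw [if_neg (by omega)]
  have hS4 : (∑ t : Fin k, (if (t : ℕ) = (i : ℕ) + 1 then
        (1 / (k.choose 2 : ℝ)) * (x * ((k - (i : ℕ)).choose 2 : ℝ))
          * (1/2 + (1/2) * (-1 : ℝ)^(t : ℕ) * c) else 0))
      = (1 / (k.choose 2 : ℝ)) * (x * ((k - (i : ℕ)).choose 2 : ℝ))
          * (1/2 - (1/2) * (-1 : ℝ)^(i : ℕ) * c) := by
    by_cases h : (i : ℕ) + 1 < k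
    · rw [fin_sum_point k ((i : ℕ) + 1) h
        (fun n => (1 / (k.choose 2 : ℝ)) * (x * ((k - (i : ℕ)).choose 2 : ℝ))
          * (1/2 + (1/2) * (-1 : ℝ)^n * c))]
      rw [pow_succ]
      ring
    · have hb0 : ((k - (i : ℕ)).choose 2 : ℝ) = 0 := by
        rw [Nat.choose_eq_zero_of_lt (by omega)]; norm_num
      rw [Finset.sum_eq_zero, hb0]
      · ring
      · intro t _
        rw [if_neg (by omega)]
  rw [hS1, hS2, hS3, hS4]
  have hKinv : (1 / (k.choose 2 : ℝ)) * (k.choose 2 : ℝ) = 1 := one_div_mul_cancel hKne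
  calc (1 / (k.choose 2 : ℝ)) * ((1 - x) * ((i : ℕ).choose 2 : ℝ))
          * (1/2 + (1/2) * (-1 : ℝ)^(i : ℕ) * c)
      + (1 / (k.choose 2 : ℝ)) * (x * ((i : ℕ).choose 2 : ℝ)
          + x * ((i : ℕ) : ℝ) * ((k - (i : ℕ) : ℕ) : ℝ))
          * (1/2 - (1/2) * (-1 : ℝ)^(i : ℕ) * c)
      + (1 / (k.choose 2 : ℝ)) * ((1 - x) * ((k - (i : ℕ)).choose 2 : ℝ)
          + (1 - x) * ((i : ℕ) : ℝ) * ((k - (i : ℕ) : ℕ) : ℝ))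
          * (1/2 + (1/2) * (-1 : ℝ)^(i : ℕ) * c)
      + (1 / (k.choose 2 : ℝ)) * (x * ((k - (i : ℕ)).choose 2 : ℝ))
          * (1/2 - (1/2) * (-1 : ℝ)^(i : ℕ) * c)
      = (1 / (k.choose 2 : ℝ)) * ((((i : ℕ).choose 2 : ℝ) + ((k - (i : ℕ)).choose 2 : ℝ)
          + ((i : ℕ) : ℝ) * ((k - (i : ℕ) : ℕ) : ℝ))
          * (1/2 + (1/2) * (-1 : ℝ)^(i : ℕ) * ((1 - 2*x) * c))) := by ring
    _ = (1 / (k.choose 2 : ℝ)) * ((k.choose 2 : ℝ)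
          * (1/2 + (1/2) * (-1 : ℝ)^(i : ℕ) * ((1 - 2*x) * c))) := by rw [← hK]
    _ = 1/2 + (1/2) * (-1 : ℝ)^(i : ℕ) * ((1 - 2*x) * c) := by
          rw [← mul_assoc, hKinv, one_mul]

private lemma coalJProd_eq (x : ℝ) (m : ℕ) (hm : 2 ≤ m) (i : Fin (m + 1)) (j : Fin 2) :
    coalJProd x m i j = 1/2 + (1/2) * (-1 : ℝ)^((i : ℕ) + (j : ℕ)) * (1 - 2*x)^(m - 1) := by
  induction m, hm using Nat.le_induction with
  | base =>
    show coalJ x 2 i j = _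
    fin_cases i <;> fin_cases j <;>
      simp [coalJ, Nat.choose] <;> ring
  | succ m hm ih =>
    obtain ⟨p, rfl⟩ : ∃ p, m = p + 2 := ⟨m - 2, by omega⟩
    have hprod : coalJProd x (p + 2 + 1) = coalJ x (p + 3) * coalJProd x (p + 2) := rfl
    rw [hprod, Matrix.mul_apply]
    have hrw : ∀ t : Fin (p + 3), coalJProd x (p + 2) t j =
        1/2 + (1/2) * (-1 : ℝ)^(t : ℕ) * ((-1 : ℝ)^(j : ℕ) * (1 - 2*x)^(p + 1)) := by
      intro t
      rw [ih t, pow_add]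
      norm_num
      ring
    calc ∑ t : Fin (p + 3), coalJ x (p + 3) i t * coalJProd x (p + 2) t j
        = ∑ t : Fin (p + 3), coalJ x (p + 3) i t *
            (1/2 + (1/2) * (-1 : ℝ)^(t : ℕ) * ((-1 : ℝ)^(j : ℕ) * (1 - 2*x)^(p + 1))) :=
          Finset.sum_congr rfl fun t _ => by rw [hrw t]
      _ = 1/2 + (1/2) * (-1 : ℝ)^(i : ℕ) *
            ((1 - 2*x) * ((-1 : ℝ)^(j : ℕ) * (1 - 2*x)^(p + 1))) :=
          coalJ_step x (p + 3) (by omega) i _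
      _ = _ := by
          have h1 : p + 2 + 1 - 1 = p + 2 := rfl
          rw [h1, pow_add, pow_add]
          ring

theorem absorption_probabilities_of_colored_coalescent (n : ℕ) (hn : 2 ≤ n)
    (x : ℝ) (hx0 : 0 < x) (hx1 : x < 1) (i : Fin (n + 1)) :
    (coalJProd x n i 0 =
        if Even (i : ℕ) then 1/2 + (1/2) * (1 - 2*x)^(n - 1)
        else 1/2 - (1/2) * (1 - 2*x)^(n - 1)) ∧
    (coalJProd x n i 1 =
        if Even (i : ℕ) then 1/2 - (1/2) * (1 - 2*x)^(n - 1)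
        else 1/2 + (1/2) * (1 - 2*x)^(n - 1)) := by
  have h0 := coalJProd_eq x n hn i 0
  have h1 := coalJProd_eq x n hn i 1
  simp only [Fin.val_zero, Fin.val_one, Nat.add_zero] at h0 h1
  rcases Nat.even_or_odd (i : ℕ) with he | ho
  · have hp : (-1 : ℝ)^(i : ℕ) = 1 := he.neg_one_pow
    have hp1 : (-1 : ℝ)^((i : ℕ) + 1) = -1 := by rw [pow_succ, hp]; ring
    rw [if_pos he, if_pos he] at *
    constructor
    · rw [h0, hp]; ring
    · rw [h1, hp1]; ring
  · have hp : (-1 : ℝ)^(i : ℕ) = -1 := ho.neg_one_pow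
    have hp1 : (-1 : ℝ)^((i : ℕ) + 1) = 1 := by rw [pow_succ, hp]; ring
    rw [if_neg (Nat.not_even_iff_odd.mpr ho), if_neg (Nat.not_even_iff_odd.mpr ho)]
    constructor
    · rw [h0, hp]; ring
    · rw [h1, hp1]; ring
end

section
/- Fix a real number x and an integer k ≥ 2. Define the (k+1)×k real matrix J_k (rows indexed i = 0,…,k; columns indexed j = 0,…,k−1) by J_k[i][j] = (1/C(k,2))·A, where A = (1−x)·C(i,2) if j = i−2, A = x·C(i,2) + x·i·(k−i) if j = i−1, A = (1−x)·C(k−i,2) + (1−x)·i·(k−i) if j = i, A = x·C(k−i,2) if j = i+1, and A = 0 otherwise; here C(m,2) = m(m−1)/2. Then for every row i: if i is even, the sum of J_k[i][j] over even j equals 1−x and the sum over odd j equals x; if i is odd, the sum over even j equals x and the sum over odd j equals 1−x. -/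
open Finset

theorem Nat.add_choose_two (m n : ℕ) : (m + n).choose 2 = m.choose 2 + m * n + n.choose 2 := by
  rw [Nat.add_choose_eq]
  simp [Finset.Nat.antidiagonal_succ, add_assoc]
  ring

theorem Fin.sum_filter_ite_intCast_eq {M : Type*} [AddCommMonoid M] {k : ℕ} (P : ℤ → Prop)
    [DecidablePred P] {n : ℤ} {v : M} (h : (0 ≤ n ∧ n < k) ∨ v = 0) :
    ∑ j ∈ univ.filter (fun j : Fin k => P j), (if (j : ℤ) = n then v else 0) =
      if P n then v else 0 := by
  rcases h with ⟨h0, hk⟩ | rfl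
  · lift n to ℕ using h0
    have hnk : n < k := by exact_mod_cast hk
    rw [sum_filter]
    simp only [Nat.cast_inj, ← ite_and]
    rw [Fintype.sum_eq_single ⟨n, hnk⟩]
    · simp
    · intro j hj
      have : (j : ℕ) ≠ n := fun h => hj (Fin.ext h)
      simp [this]
  · simp

section

variable (x : ℝ) (k : ℕ) (i : Fin (k + 1))

-- Column indices are compared in `ℤ` so that `i - 2` and `i - 1` do not truncate.
theorem coalJ_apply (j : Fin k) :
    coalJ x k i j = (1 / (k.choose 2 : ℝ)) *
      ((if (j : ℤ) = i - 2 then (1 - x) * ((i : ℕ).choose 2 : ℝ) else 0) +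
       (if (j : ℤ) = i - 1 then x * ((i : ℕ).choose 2 + (i : ℕ) * (k - i : ℕ) : ℝ) else 0) +
       (if (j : ℤ) = i then (1 - x) * ((k - i : ℕ).choose 2 + (i : ℕ) * (k - i : ℕ) : ℝ)
         else 0) +
       (if (j : ℤ) = i + 1 then x * ((k - i : ℕ).choose 2 : ℝ) else 0)) := by
  simp only [coalJ, Matrix.of_apply]
  congr 1
  split_ifs <;> first | omega | ring

theorem sum_filter_coalJ (P : ℤ → Prop) [DecidablePred P] :
    ∑ j ∈ univ.filter (fun j : Fin k => P j), coalJ x k i j = (1 / (k.choose 2 : ℝ)) *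
      ((if P (i - 2) then (1 - x) * ((i : ℕ).choose 2 : ℝ) else 0) +
       (if P (i - 1) then x * ((i : ℕ).choose 2 + (i : ℕ) * (k - i : ℕ) : ℝ) else 0) +
       (if P i then (1 - x) * ((k - i : ℕ).choose 2 + (i : ℕ) * (k - i : ℕ) : ℝ) else 0) +
       (if P (i + 1) then x * ((k - i : ℕ).choose 2 : ℝ) else 0)) := by
  have hi := i.is_lt
  simp only [coalJ_apply, ← mul_sum, sum_add_distrib]
  rw [Fin.sum_filter_ite_intCast_eq, Fin.sum_filter_ite_intCast_eq,
    Fin.sum_filter_ite_intCast_eq, Fin.sum_filter_ite_intCast_eq]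
  · rcases lt_or_ge (i : ℕ) (k - 1) with h | h
    · left; omega
    · right; simp [Nat.choose_eq_zero_of_lt (show k - i < 2 by omega)]
  · rcases lt_or_ge (i : ℕ) k with h | h
    · left; omega
    · right; simp [show k - i = 0 by omega]
  · rcases Nat.eq_zero_or_pos (i : ℕ) with h | h
    · right; simp [h]
    · left; omega
  · rcases lt_or_ge (i : ℕ) 2 with h | h
    · right; simp [Nat.choose_eq_zero_of_lt h]
    · left; omega

theorem cast_choose_two_add_choose_two_sub :
    ((i : ℕ).choose 2 + (k - i : ℕ).choose 2 + (i : ℕ) * (k - i : ℕ) : ℝ) = k.choose 2 := by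
  have h := Nat.add_choose_two i (k - i)
  rw [Nat.add_sub_cancel' (Nat.lt_succ_iff.mp i.is_lt)] at h
  rw [h]
  push_cast
  ring

theorem sum_filter_even_iff_coalJ (hk : 2 ≤ k) :
    ∑ j ∈ univ.filter (fun j : Fin k => (Even (j : ℕ) ↔ Even (i : ℕ))), coalJ x k i j =
      1 - x := by
  have h := sum_filter_coalJ x k i (fun n => Even n ↔ Even (i : ℤ))
  simp only [Int.even_coe_nat, even_sub_two, Int.even_sub_one, Int.even_add_one, iff_self,
    not_iff_self, if_true, if_false, add_zero] at h
  have hC : (k.choose 2 : ℝ) ≠ 0 := by positivity [Nat.choose_pos hk]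
  rw [h]
  rw [← cast_choose_two_add_choose_two_sub k i] at hC ⊢
  field_simp
  ring

theorem sum_filter_not_even_iff_coalJ (hk : 2 ≤ k) :
    ∑ j ∈ univ.filter (fun j : Fin k => ¬(Even (j : ℕ) ↔ Even (i : ℕ))), coalJ x k i j = x := by
  have h := sum_filter_coalJ x k i (fun n => ¬(Even n ↔ Even (i : ℤ)))
  simp only [Int.even_coe_nat, even_sub_two, Int.even_sub_one, Int.even_add_one, iff_self,
    not_iff_self, if_true, if_false, zero_add, add_zero, not_true, not_false_eq_true] at h
  have hC : (k.choose 2 : ℝ) ≠ 0 := by positivity [Nat.choose_pos hk]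
  rw [h]
  rw [← cast_choose_two_add_choose_two_sub k i] at hC ⊢
  field_simp
  ring

end

theorem coalJ_parity_lumpable (x : ℝ) (k : ℕ) (hk : 2 ≤ k) (i : Fin (k + 1)) :
    (Even (i : ℕ) →
      ∑ j ∈ Finset.univ.filter (fun j : Fin k => Even (j : ℕ)), coalJ x k i j = 1 - x ∧
      ∑ j ∈ Finset.univ.filter (fun j : Fin k => ¬ Even (j : ℕ)), coalJ x k i j = x) ∧
    (¬ Even (i : ℕ) →
      ∑ j ∈ Finset.univ.filter (fun j : Fin k => Even (j : ℕ)), coalJ x k i j = x ∧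
      ∑ j ∈ Finset.univ.filter (fun j : Fin k => ¬ Even (j : ℕ)), coalJ x k i j = 1 - x) := by
  have same := sum_filter_even_iff_coalJ x k i hk
  have other := sum_filter_not_even_iff_coalJ x k i hk
  constructor <;> intro hi <;> simp only [hi, iff_true, iff_false, not_not] at same other
  · exact ⟨same, other⟩
  · exact ⟨other, same⟩
end

section
/- Let r and v be positive integers, let c : Fin r → Fin v be a surjective map (assigning each state its partition class), and for each class η let n_η > 0 be the number of states in class η. Define the v×r matrix U by U[η][i] = 1/n_{c(i)} if c(i) = η and 0 otherwise, and the r×v matrix V by V[i][η] = 1 if c(i) = η and 0 otherwise. Then for any r×r real matrix P, the following are equivalent: (1) for all states i, j with c(i) = c(j) and every class η, ∑_{k : c(k)=η} P[i][k] = ∑_{k : c(k)=η} P[j][k]; (2) V·U·P·V = P·V. -/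
/-!
The entry `(P V) i η` is the mass that row `i` of `P` puts on class `η`, and left multiplication
by `V U` replaces every row by the average of the rows in its class. So `V U P V = P V` says that
each column of `P V` equals its own class average, i.e. is constant on the classes.
-/

open Finset

namespace Matrix

variable {ι κ α β K : Type*} [DecidableEq κ]

def partitionIndicator [Zero K] [One K] (c : ι → κ) : Matrix ι κ K :=
  of fun i η => if c i = η then 1 else 0

def partitionAverage [Fintype ι] [DivisionSemiring K] (c : ι → κ) : Matrix κ ι K :=
  of fun η i => if c i = η then 1 / #(univ.filter fun k => c k = c i) else 0

theorem mul_partitionIndicator_apply [Fintype ι] [NonAssocSemiring K] (c : ι → κ)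
    (M : Matrix α ι K) (a : α) (η : κ) :
    (M * (partitionIndicator c : Matrix ι κ K)) a η =
      ∑ k ∈ univ.filter (fun k => c k = η), M a k := by
  simp [mul_apply, partitionIndicator, sum_filter]

theorem partitionIndicator_mul_apply [Fintype κ] [NonAssocSemiring K] (c : ι → κ)
    (M : Matrix κ β K) (i : ι) (b : β) :
    ((partitionIndicator c : Matrix ι κ K) * M) i b = M (c i) b := by
  simp [mul_apply, partitionIndicator]

theorem partitionAverage_mul_apply [Fintype ι] [DivisionSemiring K] (c : ι → κ)
    (M : Matrix ι β K) (η : κ) (b : β) :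
    ((partitionAverage c : Matrix κ ι K) * M) η b =
      1 / #(univ.filter fun k => c k = η) * ∑ k ∈ univ.filter (fun k => c k = η), M k b := by
  rw [mul_apply, mul_sum, sum_filter]
  refine sum_congr rfl fun k _ => ?_
  by_cases hk : c k = η <;> simp [partitionAverage, hk]

end Matrix

theorem forall_fiberAverage_eq_iff {ι κ K : Type*} [Fintype ι] [DecidableEq κ] [Field K]
    [CharZero K] (c : ι → κ) (f : ι → K) :
    (∀ i, 1 / #(univ.filter fun k => c k = c i) * ∑ k ∈ univ.filter (fun k => c k = c i), f k
        = f i) ↔ ∀ i j, c i = c j → f i = f j := by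
  constructor
  · intro havg i j hij
    rw [← havg i, ← havg j, hij]
  · intro hconst i
    have hcard : (#(univ.filter fun k => c k = c i) : K) ≠ 0 :=
      Nat.cast_ne_zero.mpr (card_ne_zero_of_mem (mem_filter.mpr ⟨mem_univ i, rfl⟩))
    rw [sum_congr rfl fun k hk => hconst k i (mem_filter.mp hk).2, sum_const, nsmul_eq_mul]
    field_simp

open Finset in
theorem lumpability_matrix_characterization_general (r v : ℕ)
    (c : Fin r → Fin v)
    (nClass : Fin v → ℕ)
    (hn : ∀ η, nClass η = (Finset.univ.filter fun i => c i = η).card)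
    (U : Matrix (Fin v) (Fin r) ℝ)
    (hU : U = Matrix.of fun η i => if c i = η then (1 : ℝ) / nClass (c i) else 0)
    (V : Matrix (Fin r) (Fin v) ℝ)
    (hV : V = Matrix.of fun i η => if c i = η then (1 : ℝ) else 0)
    (P : Matrix (Fin r) (Fin r) ℝ) :
    (∀ i j : Fin r, c i = c j → ∀ η : Fin v,
        ∑ k ∈ Finset.univ.filter (fun k => c k = η), P i k =
        ∑ k ∈ Finset.univ.filter (fun k => c k = η), P j k) ↔
      V * U * P * V = P * V := by
  obtain rfl : nClass = fun η => #(univ.filter fun i => c i = η) := funext hn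
  replace hU : U = Matrix.partitionAverage c := hU
  replace hV : V = Matrix.partitionIndicator c := hV
  calc _ ↔ ∀ η i j, c i = c j → (P * V) i η = (P * V) j η := by
        simp only [hV, Matrix.mul_partitionIndicator_apply]
        exact ⟨fun h η i j hij => h i j hij η, fun h i j hij η => h η i j hij⟩
    _ ↔ ∀ η i, 1 / #(univ.filter fun k => c k = c i) *
          ∑ k ∈ univ.filter (fun k => c k = c i), (P * V) k η = (P * V) i η :=
        forall_congr' fun η => (forall_fiberAverage_eq_iff c _).symm
    _ ↔ _ := by
        rw [forall_comm, Matrix.mul_assoc, Matrix.mul_assoc, ← Matrix.ext_iff]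
        simp only [hU, hV, Matrix.partitionIndicator_mul_apply, Matrix.partitionAverage_mul_apply]

open Finset in
theorem lumpability_matrix_characterization (r v : ℕ)
    (c : Fin r → Fin v) (hc : Function.Surjective c)
    (nClass : Fin v → ℕ)
    (hn : ∀ η, nClass η = (Finset.univ.filter fun i => c i = η).card)
    (hnpos : ∀ η, 0 < nClass η)
    (U : Matrix (Fin v) (Fin r) ℝ)
    (hU : U = Matrix.of fun η i => if c i = η then (1 : ℝ) / nClass (c i) else 0)
    (V : Matrix (Fin r) (Fin v) ℝ)
    (hV : V = Matrix.of fun i η => if c i = η then (1 : ℝ) else 0)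
    (P : Matrix (Fin r) (Fin r) ℝ) :
    (∀ i j : Fin r, c i = c j → ∀ η : Fin v,
        ∑ k ∈ Finset.univ.filter (fun k => c k = η), P i k =
        ∑ k ∈ Finset.univ.filter (fun k => c k = η), P j k) ↔
      V * U * P * V = P * V :=
  lumpability_matrix_characterization_general r v c nClass hn U hU V hV P
end

section
/- Let Q be an r×r real matrix, U a v×r real matrix, V an r×v real matrix, and let D be an invertible diagonal r×r real matrix and D̄ an invertible diagonal v×v real matrix such that U·V = I_v, V·U·Q·V = Q·V, and D·V = V·D̄. Then U·(I_r + D⁻¹·Q)·V = I_v + D̄⁻¹·(U·Q·V), and moreover V·U·(I_r + D⁻¹·Q)·V = (I_r + D⁻¹·Q)·V. -/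
theorem lumping_commutes_with_jump_chain (r v : ℕ)
    (Q : Matrix (Fin r) (Fin r) ℝ) (U : Matrix (Fin v) (Fin r) ℝ)
    (V : Matrix (Fin r) (Fin v) ℝ)
    (D : Matrix (Fin r) (Fin r) ℝ) (Dbar : Matrix (Fin v) (Fin v) ℝ)
    (hDdiag : D.IsDiag) (hDbardiag : Dbar.IsDiag)
    (hD : IsUnit D) (hDbar : IsUnit Dbar)
    (hUV : U * V = 1) (hQ : V * U * Q * V = Q * V) (hDV : D * V = V * Dbar) :
    U * (1 + D⁻¹ * Q) * V = 1 + Dbar⁻¹ * (U * Q * V) ∧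
    V * U * (1 + D⁻¹ * Q) * V = (1 + D⁻¹ * Q) * V := by
  have hDinv : D⁻¹ * D = 1 := Matrix.nonsing_inv_mul D ((Matrix.isUnit_iff_isUnit_det D).mp hD)
  have hDbarinv : Dbar * Dbar⁻¹ = 1 :=
    Matrix.mul_nonsing_inv Dbar ((Matrix.isUnit_iff_isUnit_det Dbar).mp hDbar)
  have hkey : D⁻¹ * V = V * Dbar⁻¹ := by
    calc D⁻¹ * V = D⁻¹ * (V * Dbar) * Dbar⁻¹ := by
          rw [Matrix.mul_assoc, Matrix.mul_assoc, hDbarinv, Matrix.mul_one]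
      _ = D⁻¹ * (D * V) * Dbar⁻¹ := by rw [hDV]
      _ = V * Dbar⁻¹ := by rw [← Matrix.mul_assoc, hDinv, Matrix.one_mul]
  have h1 : D⁻¹ * Q * V = V * (Dbar⁻¹ * (U * Q * V)) := by
    calc D⁻¹ * Q * V = D⁻¹ * (V * U * Q * V) := by rw [hQ, Matrix.mul_assoc]
      _ = D⁻¹ * V * (U * Q * V) := by
          simp only [Matrix.mul_assoc]
      _ = V * (Dbar⁻¹ * (U * Q * V)) := by rw [hkey, Matrix.mul_assoc]
  constructor
  · calc U * (1 + D⁻¹ * Q) * V = U * V + U * (D⁻¹ * Q * V) := by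
          rw [Matrix.mul_add, Matrix.mul_one, Matrix.add_mul, Matrix.mul_assoc,
            Matrix.mul_assoc]
      _ = 1 + Dbar⁻¹ * (U * Q * V) := by
          rw [hUV, h1, ← Matrix.mul_assoc U V, hUV, Matrix.one_mul, Matrix.mul_assoc]
  · calc V * U * (1 + D⁻¹ * Q) * V = V * (U * V) + V * U * (D⁻¹ * Q * V) := by
          rw [Matrix.mul_add, Matrix.mul_one, Matrix.add_mul]
          simp only [Matrix.mul_assoc]
      _ = V + V * (Dbar⁻¹ * (U * Q * V)) := by
          rw [hUV, h1, Matrix.mul_one, Matrix.mul_assoc V U, ← Matrix.mul_assoc U V, hUV,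
            Matrix.one_mul]
      _ = (1 + D⁻¹ * Q) * V := by rw [← h1, Matrix.add_mul, Matrix.one_mul]
end
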